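/- arXiv:1001.5220 — 6 statements merged into one kernel-verified Lean document; each statement's English description precedes it below -/
import Mathlib

section
/- Let A be an integral domain, ⋆ a star operation of finite type on A, and 𝔞 a proper ⋆-finite ⋆-ideal of A satisfying property (⋆-c.a.). Then the set 𝔪_𝔞 := {x ∈ A : ((x) + 𝔞)^⋆ ≠ A} is an ideal of A, and it is the unique ⋆-maximal ideal of A containing 𝔞. -/
open scoped nonZeroDivisors

/-- A star operation on an integral domain `A` with quotient field `K`: a map on
(nonzero) fractional ideals satisfying `A^⋆ = A`, `(xI)^⋆ = x·I^⋆`, `I ⊆ I^⋆`,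
monotonicity and idempotency. -/
structure StarOperation (A : Type*) [CommRing A] [IsDomain A]
    (K : Type*) [Field K] [Algebra A K] [IsFractionRing A K] where
  star : FractionalIdeal A⁰ K → FractionalIdeal A⁰ K
  star_one : star 1 = 1
  star_smul : ∀ (x : K), x ≠ 0 → ∀ I : FractionalIdeal A⁰ K, I ≠ 0 →
    star (FractionalIdeal.spanSingleton A⁰ x * I) = FractionalIdeal.spanSingleton A⁰ x * star I
  le_star : ∀ I : FractionalIdeal A⁰ K, I ≠ 0 → I ≤ star I
  mono : ∀ I J : FractionalIdeal A⁰ K, I ≠ 0 → I ≤ J → star I ≤ star J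
  star_idem : ∀ I : FractionalIdeal A⁰ K, I ≠ 0 → star (star I) = star I

variable {A : Type*} [CommRing A] [IsDomain A]
  {K : Type*} [Field K] [Algebra A K] [IsFractionRing A K]

/-- `⋆` is of finite type: `I^⋆` is the union of the `J^⋆` over the finitely
generated (nonzero) fractional ideals `J ⊆ I`. -/
def StarOperation.IsFiniteType (s : StarOperation A K) : Prop :=
  ∀ I : FractionalIdeal A⁰ K, I ≠ 0 → ∀ x : K, x ∈ s.star I →
    ∃ J : FractionalIdeal A⁰ K, J ≠ 0 ∧ J ≤ I ∧ (J : Submodule A K).FG ∧ x ∈ s.star J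

/-- A (nonzero, integral) ideal `I` is a `⋆`-ideal if `I^⋆ = I`. -/
def IsStarIdeal (s : StarOperation A K) (I : Ideal A) : Prop :=
  I ≠ 0 ∧ s.star ↑I = (I : FractionalIdeal A⁰ K)

/-- A (nonzero, integral) ideal `I` is `⋆`-finite if `J^⋆ = I^⋆` for some finitely
generated (nonzero) ideal `J`. -/
def IsStarFinite (s : StarOperation A K) (I : Ideal A) : Prop :=
  I ≠ 0 ∧ ∃ J : Ideal A, J ≠ 0 ∧ J.FG ∧ s.star ↑J = s.star (I : FractionalIdeal A⁰ K)

/-- An ideal of `A` is `⋆`-maximal if it is maximal among proper `⋆`-ideals. -/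
def IsStarMaximal (s : StarOperation A K) (M : Ideal A) : Prop :=
  M ≠ ⊤ ∧ IsStarIdeal s M ∧ ∀ J : Ideal A, J ≠ ⊤ → IsStarIdeal s J → M ≤ J → J = M

/-- Property (⋆-c.a.): for every pair of proper ⋆-finite ⋆-ideals `𝔞₁, 𝔞₂` containing
`𝔞`, the ideal `(𝔞₁ + 𝔞₂)^⋆` is proper. -/
def StarCA (s : StarOperation A K) (𝔞 : Ideal A) : Prop :=
  ∀ 𝔞₁ 𝔞₂ : Ideal A, 𝔞 ≤ 𝔞₁ → 𝔞 ≤ 𝔞₂ →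
    𝔞₁ ≠ ⊤ → IsStarIdeal s 𝔞₁ → IsStarFinite s 𝔞₁ →
    𝔞₂ ≠ ⊤ → IsStarIdeal s 𝔞₂ → IsStarFinite s 𝔞₂ →
    s.star ↑(𝔞₁ + 𝔞₂) ≠ 1

/-- `ℱ` is a ⋆-comaximal collection over `a`: `a` lies in every member and
`(𝔞₁ + 𝔞₂)^⋆ = A` for all distinct members. -/
def IsStarComaximalOver (s : StarOperation A K) (a : A) (F : Set (Ideal A)) : Prop :=
  (∀ I ∈ F, a ∈ I) ∧ ∀ I ∈ F, ∀ J ∈ F, I ≠ J → s.star ↑(I + J) = 1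

/-- `(Σ')^⋆_a`: the ⋆-comaximal collections over `a` of proper ⋆-finite ⋆-ideals. -/
def SigmaP (s : StarOperation A K) (a : A) : Set (Set (Ideal A)) :=
  {F | IsStarComaximalOver s a F ∧ ∀ I ∈ F, I ≠ ⊤ ∧ IsStarIdeal s I ∧ IsStarFinite s I}

/-- `Σ^⋆_a`: members of `(Σ')^⋆_a` all of whose ideals satisfy (⋆-c.a.). -/
def SigmaCA (s : StarOperation A K) (a : A) : Set (Set (Ideal A)) :=
  {F | F ∈ SigmaP s a ∧ ∀ I ∈ F, StarCA s I}

/-! By (⋆-c.a.), the proper ⋆-finite ⋆-ideals containing `𝔞` form a directed family: with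
`𝔞₁, 𝔞₂` it contains `(𝔞₁ + 𝔞₂)^⋆`. As `⋆` has finite type, the union `𝔪` of this family is a
proper ⋆-ideal, and it contains every proper ⋆-ideal `J ⊇ 𝔞`, since each `x ∈ J` lies in the
member `((x) + 𝔞)^⋆`. So `𝔪` is the largest proper ⋆-ideal over `𝔞`, hence the unique ⋆-maximal
ideal over `𝔞`, and `x ∈ 𝔪` exactly when `((x) + 𝔞)^⋆ ≠ A`. -/

theorem Ideal.sSup_ne_top_of_directedOn {R : Type*} [CommSemiring R] {S : Set (Ideal R)}
    (hne : S.Nonempty) (hdir : DirectedOn (· ≤ ·) S) (hS : ∀ B ∈ S, B ≠ ⊤) : sSup S ≠ ⊤ := by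
  intro htop
  obtain ⟨B, hB, hB'⟩ :=
    (CompleteLattice.isCompactElement_iff_le_of_directed_sSup_le _ _).mp
      Ideal.isCompactElement_top S hne hdir htop.ge
  exact hS B hB (top_le_iff.mp hB')

namespace StarOperation

variable (s : StarOperation A K)

section FractionalIdeal

variable {I J X Y Y' : FractionalIdeal A⁰ K}

theorem star_le_star_of_le_star (hI : I ≠ 0) (hJ : J ≠ 0) (h : I ≤ s.star J) :
    s.star I ≤ s.star J :=
  s.star_idem J hJ ▸ s.mono I _ hI h

theorem star_sup_mono_right (hY : Y ≠ 0) (hY' : Y' ≠ 0) (h : s.star Y ≤ s.star Y') :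
    s.star (X ⊔ Y) ≤ s.star (X ⊔ Y') := by
  have hXY' : X ⊔ Y' ≠ 0 := ne_bot_of_le_ne_bot hY' le_sup_right
  refine s.star_le_star_of_le_star (ne_bot_of_le_ne_bot hY le_sup_right) hXY' (sup_le ?_ ?_)
  · exact le_sup_left.trans (s.le_star _ hXY')
  · exact (s.le_star Y hY).trans (h.trans (s.mono _ _ hY' le_sup_right))

theorem star_sup_congr_right (hY : Y ≠ 0) (hY' : Y' ≠ 0) (h : s.star Y = s.star Y') :
    s.star (X ⊔ Y) = s.star (X ⊔ Y') :=
  (s.star_sup_mono_right hY hY' h.le).antisymm (s.star_sup_mono_right hY' hY h.ge)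

end FractionalIdeal

section Ideal

variable {I J X Y Y' : Ideal A}

theorem star_coeIdeal_sup_congr_right (hY : Y ≠ 0) (hY' : Y' ≠ 0)
    (h : s.star (Y : FractionalIdeal A⁰ K) = s.star Y') :
    s.star ((X ⊔ Y : Ideal A) : FractionalIdeal A⁰ K) = s.star ↑(X ⊔ Y') := by
  simp only [FractionalIdeal.coeIdeal_sup, ← FractionalIdeal.sup_eq_add]
  exact s.star_sup_congr_right (FractionalIdeal.coeIdeal_ne_zero.mpr hY)
    (FractionalIdeal.coeIdeal_ne_zero.mpr hY') h

theorem star_coeIdeal_le_one (hI : I ≠ 0) : s.star (I : FractionalIdeal A⁰ K) ≤ 1 :=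
  s.star_one ▸
    s.mono _ _ (FractionalIdeal.coeIdeal_ne_zero.mpr hI) FractionalIdeal.coeIdeal_le_one

/-- For `I ≠ 0` this is `I^⋆` as an ideal of `A` (`coe_idealStar`); `s.star 0` is
unconstrained. -/
def idealStar (I : Ideal A) : Ideal A :=
  (s.star (I : FractionalIdeal A⁰ K) : Submodule A K).comap (Algebra.linearMap A K)

theorem coe_idealStar (hI : I ≠ 0) :
    (s.idealStar I : FractionalIdeal A⁰ K) = s.star I := by
  obtain ⟨J, hJ⟩ := FractionalIdeal.le_one_iff_exists_coeIdeal.mp (s.star_coeIdeal_le_one hI)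
  rw [idealStar, ← hJ, FractionalIdeal.coe_coeIdeal, IsLocalization.coeSubmodule,
    Submodule.comap_map_eq_of_injective (IsFractionRing.injective A K)]

theorem le_idealStar (hI : I ≠ 0) : I ≤ s.idealStar I := by
  rw [← FractionalIdeal.coeIdeal_le_coeIdeal K, s.coe_idealStar hI]
  exact s.le_star _ (FractionalIdeal.coeIdeal_ne_zero.mpr hI)

theorem isStarIdeal_idealStar (hI : I ≠ 0) : IsStarIdeal s (s.idealStar I) :=
  ⟨ne_bot_of_le_ne_bot hI (s.le_idealStar hI),
    by rw [s.coe_idealStar hI, s.star_idem _ (FractionalIdeal.coeIdeal_ne_zero.mpr hI)]⟩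

theorem idealStar_le (hI : I ≠ 0) (hJ : IsStarIdeal s J) (h : I ≤ J) : s.idealStar I ≤ J := by
  rw [← FractionalIdeal.coeIdeal_le_coeIdeal K, s.coe_idealStar hI, ← hJ.2]
  exact s.mono _ _ (FractionalIdeal.coeIdeal_ne_zero.mpr hI)
    ((FractionalIdeal.coeIdeal_le_coeIdeal K).mpr h)

theorem idealStar_ne_top_iff (hI : I ≠ 0) :
    s.idealStar I ≠ ⊤ ↔ s.star (I : FractionalIdeal A⁰ K) ≠ 1 := by
  rw [← s.coe_idealStar hI, ← FractionalIdeal.coeIdeal_top, Ne, Ne,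
    FractionalIdeal.coeIdeal_inj]

theorem star_ne_one_of_le (hJ : IsStarIdeal s J) (hJtop : J ≠ ⊤) (hI : I ≠ 0) (h : I ≤ J) :
    s.star (I : FractionalIdeal A⁰ K) ≠ 1 :=
  (s.idealStar_ne_top_iff hI).mp (ne_top_of_le_ne_top hJtop (s.idealStar_le hI hJ h))

end Ideal

theorem isStarIdeal_sSup_of_directedOn (hs : s.IsFiniteType) {S : Set (Ideal A)}
    (hne : S.Nonempty) (hdir : DirectedOn (· ≤ ·) S) (hS : ∀ B ∈ S, IsStarIdeal s B) :
    IsStarIdeal s (sSup S) := by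
  obtain ⟨B₀, hB₀⟩ := hne
  have h0 : sSup S ≠ 0 := ne_bot_of_le_ne_bot (hS B₀ hB₀).1 (le_sSup hB₀)
  have h0' := FractionalIdeal.coeIdeal_ne_zero (K := K).mpr h0
  refine ⟨h0, le_antisymm (fun z hz => ?_) (s.le_star _ h0')⟩
  obtain ⟨J, hJ0, hJle, hJfg, hzJ⟩ := hs _ h0' z hz
  obtain ⟨I, rfl⟩ :=
    FractionalIdeal.le_one_iff_exists_coeIdeal.mp (hJle.trans FractionalIdeal.coeIdeal_le_one)
  have hIfg : I.FG :=
    (FractionalIdeal.coeIdeal_fg A⁰ (IsFractionRing.injective A K) I).mp hJfg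
  obtain ⟨B, hB, hIB⟩ :=
    (CompleteLattice.isCompactElement_iff_le_of_directed_sSup_le _ I).mp
      ((Submodule.fg_iff_compact I).mp hIfg) S ⟨B₀, hB₀⟩ hdir
      ((FractionalIdeal.coeIdeal_le_coeIdeal K).mp hJle)
  have hIB' : s.star (I : FractionalIdeal A⁰ K) ≤ B :=
    (hS B hB).2 ▸ s.mono _ _ hJ0 ((FractionalIdeal.coeIdeal_le_coeIdeal K).mpr hIB)
  exact (FractionalIdeal.coeIdeal_le_coeIdeal K).mpr (le_sSup hB) (hIB' hzJ)

end StarOperation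

section StarFinite

variable {s : StarOperation A K} {I I₁ I₂ J X : Ideal A}

theorem IsStarFinite.of_star_eq (h : IsStarFinite s I) (hJ : J ≠ 0)
    (e : s.star (I : FractionalIdeal A⁰ K) = s.star J) : IsStarFinite s J :=
  ⟨hJ, h.2.imp fun _ ⟨h0, hfg, he⟩ => ⟨h0, hfg, he.trans e⟩⟩

theorem IsStarFinite.idealStar (h : IsStarFinite s I) : IsStarFinite s (s.idealStar I) :=
  h.of_star_eq (s.isStarIdeal_idealStar h.1).1
    (by rw [s.coe_idealStar h.1, s.star_idem _ (FractionalIdeal.coeIdeal_ne_zero.mpr h.1)])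

theorem IsStarFinite.fg_sup (hX : X.FG) (h : IsStarFinite s I) : IsStarFinite s (X ⊔ I) := by
  obtain ⟨J, hJ, hJfg, e⟩ := h.2
  exact ⟨ne_bot_of_le_ne_bot h.1 le_sup_right, X ⊔ J, ne_bot_of_le_ne_bot hJ le_sup_right,
    Submodule.FG.sup hX hJfg, s.star_coeIdeal_sup_congr_right hJ h.1 e⟩

theorem IsStarFinite.sup (h₁ : IsStarFinite s I₁) (h₂ : IsStarFinite s I₂) :
    IsStarFinite s (I₁ ⊔ I₂) := by
  obtain ⟨J₁, hJ₁, hJ₁fg, e₁⟩ := h₁.2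
  refine (h₂.fg_sup hJ₁fg).of_star_eq (ne_bot_of_le_ne_bot h₁.1 le_sup_left) ?_
  rw [sup_comm J₁, sup_comm I₁]
  exact s.star_coeIdeal_sup_congr_right hJ₁ h₁.1 e₁

end StarFinite

namespace StarOperation

variable (s : StarOperation A K) (𝔞 : Ideal A)

def properStarIdealsAbove : Set (Ideal A) :=
  {J | 𝔞 ≤ J ∧ J ≠ ⊤ ∧ IsStarIdeal s J}

def properFiniteStarIdealsAbove : Set (Ideal A) :=
  {J ∈ s.properStarIdealsAbove 𝔞 | IsStarFinite s J}

variable {s 𝔞}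

theorem idealStar_mem_properFiniteStarIdealsAbove {I : Ideal A} (h𝔞 : 𝔞 ≠ 0) (h𝔞I : 𝔞 ≤ I)
    (hI : IsStarFinite s I) (hI1 : s.star (I : FractionalIdeal A⁰ K) ≠ 1) :
    s.idealStar I ∈ s.properFiniteStarIdealsAbove 𝔞 :=
  have hI0 : I ≠ 0 := ne_bot_of_le_ne_bot h𝔞 h𝔞I
  ⟨⟨h𝔞I.trans (s.le_idealStar hI0), (s.idealStar_ne_top_iff hI0).mpr hI1,
    s.isStarIdeal_idealStar hI0⟩, hI.idealStar⟩

theorem directedOn_properFiniteStarIdealsAbove (h𝔞 : 𝔞 ≠ 0) (hca : StarCA s 𝔞) :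
    DirectedOn (· ≤ ·) (s.properFiniteStarIdealsAbove 𝔞) := by
  rintro B₁ ⟨⟨h𝔞₁, htop₁, hstar₁⟩, hfin₁⟩ B₂ ⟨⟨h𝔞₂, htop₂, hstar₂⟩, hfin₂⟩
  have hB : B₁ ⊔ B₂ ≠ 0 := ne_bot_of_le_ne_bot hfin₁.1 le_sup_left
  exact ⟨s.idealStar (B₁ ⊔ B₂),
    idealStar_mem_properFiniteStarIdealsAbove h𝔞 (h𝔞₁.trans le_sup_left) (hfin₁.sup hfin₂)
      (hca B₁ B₂ h𝔞₁ h𝔞₂ htop₁ hstar₁ hfin₁ htop₂ hstar₂ hfin₂),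
    le_sup_left.trans (s.le_idealStar hB), le_sup_right.trans (s.le_idealStar hB)⟩

theorem le_sSup_properFiniteStarIdealsAbove (h𝔞 : IsStarFinite s 𝔞) {J : Ideal A}
    (hJ : J ∈ s.properStarIdealsAbove 𝔞) : J ≤ sSup (s.properFiniteStarIdealsAbove 𝔞) := by
  intro x hx
  have hxJ : Ideal.span {x} ⊔ 𝔞 ≤ J :=
    sup_le ((Ideal.span_singleton_le_iff_mem J).mpr hx) hJ.1
  have hx0 : Ideal.span {x} ⊔ 𝔞 ≠ 0 := ne_bot_of_le_ne_bot h𝔞.1 le_sup_right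
  exact le_sSup (idealStar_mem_properFiniteStarIdealsAbove h𝔞.1 le_sup_right
      (h𝔞.fg_sup (Submodule.fg_span_singleton x))
      (s.star_ne_one_of_le hJ.2.2 hJ.2.1 hx0 hxJ))
    (s.le_idealStar hx0 (Ideal.mem_sup_left (Ideal.mem_span_singleton_self x)))

theorem isGreatest_sSup_properFiniteStarIdealsAbove (hs : s.IsFiniteType)
    (h𝔞 : 𝔞 ∈ s.properFiniteStarIdealsAbove 𝔞) (hca : StarCA s 𝔞) :
    IsGreatest (s.properStarIdealsAbove 𝔞) (sSup (s.properFiniteStarIdealsAbove 𝔞)) := by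
  have hdir := directedOn_properFiniteStarIdealsAbove h𝔞.2.1 hca
  refine ⟨⟨le_sSup h𝔞, Ideal.sSup_ne_top_of_directedOn ⟨𝔞, h𝔞⟩ hdir fun B hB => hB.1.2.1,
    s.isStarIdeal_sSup_of_directedOn hs ⟨𝔞, h𝔞⟩ hdir fun B hB => hB.1.2.2⟩,
    fun _ => le_sSup_properFiniteStarIdealsAbove h𝔞.2⟩

end StarOperation

section IsGreatest

variable {s : StarOperation A K} {𝔞 : Ideal A}

theorem IsGreatest.mem_iff_star_span_sup_ne_one {M : Ideal A}
    (hM : IsGreatest (s.properStarIdealsAbove 𝔞) M) (h𝔞 : 𝔞 ≠ 0) (x : A) :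
    x ∈ M ↔ s.star ↑(Ideal.span {x} ⊔ 𝔞) ≠ 1 := by
  have hx0 : Ideal.span {x} ⊔ 𝔞 ≠ 0 := ne_bot_of_le_ne_bot h𝔞 le_sup_right
  refine ⟨fun hx => s.star_ne_one_of_le hM.1.2.2 hM.1.2.1 hx0
    (sup_le ((Ideal.span_singleton_le_iff_mem M).mpr hx) hM.1.1), fun hx => ?_⟩
  exact hM.2 ⟨le_sup_right.trans (s.le_idealStar hx0), (s.idealStar_ne_top_iff hx0).mpr hx,
    s.isStarIdeal_idealStar hx0⟩
    (s.le_idealStar hx0 (Ideal.mem_sup_left (Ideal.mem_span_singleton_self x)))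

theorem IsGreatest.isStarMaximal {M : Ideal A}
    (hM : IsGreatest (s.properStarIdealsAbove 𝔞) M) : IsStarMaximal s M :=
  ⟨hM.1.2.1, hM.1.2.2,
    fun _ hJtop hJ hMJ => (hM.2 ⟨hM.1.1.trans hMJ, hJtop, hJ⟩).antisymm hMJ⟩

theorem IsGreatest.eq_of_isStarMaximal {M N : Ideal A}
    (hM : IsGreatest (s.properStarIdealsAbove 𝔞) M) (hN : IsStarMaximal s N) (h𝔞N : 𝔞 ≤ N) :
    N = M :=
  (hN.2.2 M hM.1.2.1 hM.1.2.2 (hM.2 ⟨h𝔞N, hN.1, hN.2.1⟩)).symm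

end IsGreatest

/-- Let `A` be an integral domain, `⋆` a finite type star operation on `A`, and `𝔞` a
proper ⋆-finite ⋆-ideal of `A` satisfying property (⋆-c.a.). Then
`𝔪_𝔞 = {x ∈ A : ((x) + 𝔞)^⋆ ≠ A}` is an ideal of `A`, and it is the unique ⋆-maximal
ideal of `A` containing `𝔞`. -/
theorem star_ca_unique_star_maximal
    (s : StarOperation A K) (hs : s.IsFiniteType) (𝔞 : Ideal A) (h𝔞top : 𝔞 ≠ ⊤)
    (h𝔞star : IsStarIdeal s 𝔞) (h𝔞fin : IsStarFinite s 𝔞) (h𝔞ca : StarCA s 𝔞) :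
    ∃ 𝔪 : Ideal A,
      (𝔪 : Set A) = {x : A | s.star ↑(Ideal.span {x} + 𝔞) ≠ 1} ∧
      IsStarMaximal s 𝔪 ∧ 𝔞 ≤ 𝔪 ∧
      ∀ 𝔫 : Ideal A, IsStarMaximal s 𝔫 → 𝔞 ≤ 𝔫 → 𝔫 = 𝔪 := by
  have hM := StarOperation.isGreatest_sSup_properFiniteStarIdealsAbove hs
    ⟨⟨le_rfl, h𝔞top, h𝔞star⟩, h𝔞fin⟩ h𝔞ca
  exact ⟨_, Set.ext (hM.mem_iff_star_span_sup_ne_one h𝔞star.1), hM.isStarMaximal, hM.1.1,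
    fun 𝔫 h𝔫 h𝔞𝔫 => hM.eq_of_isStarMaximal h𝔫 h𝔞𝔫⟩
end

section
/- Let A be an integral domain, ⋆ a star operation on A, and a a nonzero nonunit of A. Assume that every proper ⋆-finite ⋆-ideal of A containing a is contained in a proper ⋆-finite ⋆-ideal of A satisfying property (⋆-c.a.). Then the poset (Σ^⋆_a, ⊆) has maximal elements. -/
open scoped nonZeroDivisors

variable {A : Type*} [CommRing A] [IsDomain A]
  {K : Type*} [Field K] [Algebra A K] [IsFractionRing A K]

/-! Zorn's lemma: comaximality, ⋆-finiteness, being a ⋆-ideal and property (⋆-c.a.) are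
conditions on single members or on pairs of members of a collection, and any two members of
the union of a chain of collections already lie in a common collection of the chain. -/

theorem IsStarComaximalOver.sUnion_of_isChain {s : StarOperation A K} {a : A}
    {c : Set (Set (Ideal A))} (hc : IsChain (· ⊆ ·) c)
    (hcomax : ∀ F ∈ c, IsStarComaximalOver s a F) : IsStarComaximalOver s a (⋃₀ c) := by
  refine ⟨fun I ⟨F, hF, hIF⟩ ↦ (hcomax F hF).1 I hIF, ?_⟩
  rintro I ⟨F, hF, hIF⟩ J ⟨G, hG, hJG⟩ hIJ
  rcases hc.total hF hG with hFG | hGF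
  · exact (hcomax G hG).2 I (hFG hIF) J hJG hIJ
  · exact (hcomax F hF).2 I hIF J (hGF hJG) hIJ

theorem sUnion_mem_sigmaCA_of_isChain {s : StarOperation A K} {a : A}
    {c : Set (Set (Ideal A))} (hcS : c ⊆ SigmaCA s a) (hc : IsChain (· ⊆ ·) c) :
    ⋃₀ c ∈ SigmaCA s a :=
  ⟨⟨IsStarComaximalOver.sUnion_of_isChain hc fun _ hF ↦ (hcS hF).1.1,
    fun I ⟨_, hF, hIF⟩ ↦ (hcS hF).1.2 I hIF⟩,
    fun I ⟨_, hF, hIF⟩ ↦ (hcS hF).2 I hIF⟩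

theorem sigmaCA_has_maximal_elements_general
    (s : StarOperation A K) (a : A) :
    ∃ F ∈ SigmaCA s a, ∀ G ∈ SigmaCA s a, F ⊆ G → G = F := by
  obtain ⟨M, hM⟩ := zorn_subset (SigmaCA s a) fun c hcS hc ↦
    ⟨⋃₀ c, sUnion_mem_sigmaCA_of_isChain hcS hc, fun _ ↦ Set.subset_sUnion_of_mem⟩
  exact ⟨M, hM.1, fun G hG hMG ↦ (hM.eq_of_le hG hMG).symm⟩

/-- Let `A` be an integral domain, `⋆` a star operation on `A`, and `a` a nonzero
nonunit of `A`. If every proper ⋆-finite ⋆-ideal of `A` containing `a` is contained in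
a proper ⋆-finite ⋆-ideal satisfying (⋆-c.a.), then `(Σ^⋆_a, ⊆)` has maximal
elements. -/
theorem sigmaCA_has_maximal_elements
    (s : StarOperation A K) (a : A) (ha : a ≠ 0) (hau : ¬IsUnit a)
    (h : ∀ 𝔞 : Ideal A, a ∈ 𝔞 → 𝔞 ≠ ⊤ → IsStarIdeal s 𝔞 → IsStarFinite s 𝔞 →
      ∃ 𝔟 : Ideal A, 𝔞 ≤ 𝔟 ∧ 𝔟 ≠ ⊤ ∧ IsStarIdeal s 𝔟 ∧ IsStarFinite s 𝔟 ∧ StarCA s 𝔟) :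
    ∃ F ∈ SigmaCA s a, ∀ G ∈ SigmaCA s a, F ⊆ G → G = F :=
  sigmaCA_has_maximal_elements_general s a
end

section
/- Let A be an integral domain, ⋆ a star operation on A, and a a nonzero element of A. Assume that every collection in (Σ')^⋆_a is finite. Then for every proper ⋆-finite ⋆-ideal 𝔞 of A containing a, there exists a proper ⋆-finite ⋆-ideal 𝔟 of A containing 𝔞 that satisfies property (⋆-c.a.). -/
/-!
If no proper ⋆-finite ⋆-ideal above `𝔞` satisfied (⋆-c.a.), every such ideal `𝔟` would lie
below two such ideals `𝔠₁, 𝔠₂` with `(𝔠₁ + 𝔠₂)^⋆ = A`. Climbing along the `𝔠₂`'s produces an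
increasing chain `𝔟₀ ⊆ 𝔟₁ ⊆ ⋯`, and the `𝔠₁`'s split off at each step are pairwise
⋆-comaximal, since `(𝔠₁ + 𝔠₂)^⋆ = A` persists when both summands grow. They form an infinite
member of `(Σ')^⋆_a`.
-/

open scoped nonZeroDivisors

variable {A : Type*} [CommRing A] [IsDomain A]
  {K : Type*} [Field K] [Algebra A K] [IsFractionRing A K]

theorem exists_seq_forall_lt_of_forall_exists_le {α : Type*} [Preorder α] [Nonempty α]
    {R : α → α → Prop} (hR : ∀ ⦃y z y' z'⦄, y ≤ y' → z ≤ z' → R y z → R y' z')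
    (h : ∀ x, ∃ y z, x ≤ y ∧ x ≤ z ∧ R y z) :
    ∃ f : ℕ → α, ∀ ⦃n m⦄, n < m → R (f n) (f m) := by
  choose left right le_left le_right hrel using h
  let x₀ : α := Classical.arbitrary α
  have hmono : Monotone fun n => right^[n] x₀ :=
    monotone_nat_of_le_succ fun n => by
      simpa only [Function.iterate_succ_apply'] using le_right _
  refine ⟨fun n => left (right^[n] x₀), fun n m hnm => hR le_rfl ?_ (hrel _)⟩
  calc right (right^[n] x₀) = right^[n + 1] x₀ := (Function.iterate_succ_apply' ..).symm
    _ ≤ right^[m] x₀ := hmono hnm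
    _ ≤ left (right^[m] x₀) := le_left _

namespace StarOperation

variable (s : StarOperation A K)

theorem star_eq_one_of_le {I J : FractionalIdeal A⁰ K} (hI : I ≠ 0) (hIJ : I ≤ J) (hJ : J ≤ 1)
    (h : s.star I = 1) : s.star J = 1 := by
  have hJ0 : J ≠ 0 := ne_bot_of_le_ne_bot hI hIJ
  refine le_antisymm ?_ (h ▸ s.mono I J hI hIJ)
  simpa only [s.star_one] using s.mono J 1 hJ0 hJ

theorem star_coeIdeal_eq_one_of_le {I J : Ideal A} (hI : I ≠ ⊥) (hIJ : I ≤ J)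
    (h : s.star (I : FractionalIdeal A⁰ K) = 1) : s.star (J : FractionalIdeal A⁰ K) = 1 :=
  s.star_eq_one_of_le (FractionalIdeal.coeIdeal_ne_zero.mpr hI)
    (FractionalIdeal.coeIdeal_le_coeIdeal K |>.mpr hIJ) FractionalIdeal.coeIdeal_le_one h

end StarOperation

variable {s : StarOperation A K}

theorem IsStarIdeal.star_ne_one {I : Ideal A} (hI : IsStarIdeal s I) (hne : I ≠ ⊤) :
    s.star (I : FractionalIdeal A⁰ K) ≠ 1 := by
  rw [hI.2, Ne, FractionalIdeal.coeIdeal_eq_one, Ideal.one_eq_top]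
  exact hne

theorem not_starCA_iff {𝔟 : Ideal A} :
    ¬ StarCA s 𝔟 ↔ ∃ 𝔠₁ 𝔠₂ : Ideal A, 𝔟 ≤ 𝔠₁ ∧ 𝔟 ≤ 𝔠₂ ∧
      (𝔠₁ ≠ ⊤ ∧ IsStarIdeal s 𝔠₁ ∧ IsStarFinite s 𝔠₁) ∧
      (𝔠₂ ≠ ⊤ ∧ IsStarIdeal s 𝔠₂ ∧ IsStarFinite s 𝔠₂) ∧ s.star ↑(𝔠₁ + 𝔠₂) = 1 := by
  simp only [StarCA, not_forall, not_not, exists_prop, and_assoc]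

theorem injective_of_pairwise_star_add_eq_one {ι : Type*} {f : ι → Ideal A}
    (hf : ∀ n, f n ≠ ⊤ ∧ IsStarIdeal s (f n))
    (hcomax : Pairwise fun n m => s.star ↑(f n + f m) = 1) : Function.Injective f := by
  intro n m hnm
  by_contra hne
  have h : s.star ↑(f n + f m) = 1 := hcomax hne
  rw [hnm, Ideal.add_eq_sup, sup_idem] at h
  exact (hf m).2.star_ne_one (hf m).1 h

theorem range_mem_sigmaP {a : A} {ι : Type*} {f : ι → Ideal A} (haf : ∀ n, a ∈ f n)
    (hf : ∀ n, f n ≠ ⊤ ∧ IsStarIdeal s (f n) ∧ IsStarFinite s (f n))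
    (hcomax : Pairwise fun n m => s.star ↑(f n + f m) = 1) : Set.range f ∈ SigmaP s a := by
  refine ⟨⟨?_, ?_⟩, ?_⟩
  · rintro _ ⟨n, rfl⟩
    exact haf n
  · rintro _ ⟨n, rfl⟩ _ ⟨m, rfl⟩ hfnm
    exact hcomax fun hnm => hfnm (congrArg f hnm)
  · rintro _ ⟨n, rfl⟩
    exact hf n

/-- Let `A` be an integral domain, `⋆` a star operation on `A`, and `a ≠ 0`. If every
collection in `(Σ')^⋆_a` is finite, then every proper ⋆-finite ⋆-ideal of `A`
containing `a` is contained in a proper ⋆-finite ⋆-ideal satisfying (⋆-c.a.). -/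
theorem exists_ca_ideal_of_sigmaP_finite
    (s : StarOperation A K) (a : A) (ha : a ≠ 0)
    (h : ∀ F ∈ SigmaP s a, F.Finite) :
    ∀ 𝔞 : Ideal A, a ∈ 𝔞 → 𝔞 ≠ ⊤ → IsStarIdeal s 𝔞 → IsStarFinite s 𝔞 →
      ∃ 𝔟 : Ideal A, 𝔞 ≤ 𝔟 ∧ 𝔟 ≠ ⊤ ∧ IsStarIdeal s 𝔟 ∧ IsStarFinite s 𝔟 ∧ StarCA s 𝔟 := by
  intro 𝔞 ha𝔞 hne hsi hsf
  by_contra! hcon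
  let Q := {𝔟 : Ideal A // 𝔞 ≤ 𝔟 ∧ 𝔟 ≠ ⊤ ∧ IsStarIdeal s 𝔟 ∧ IsStarFinite s 𝔟}
  have : Nonempty Q := ⟨⟨𝔞, le_rfl, hne, hsi, hsf⟩⟩
  have hne_bot (𝔟 𝔠 : Q) : 𝔟.1 + 𝔠.1 ≠ ⊥ := fun hbot =>
    ha <| (Submodule.eq_bot_iff _).mp hbot a (Ideal.mem_sup_left (𝔟.2.1 ha𝔞))
  obtain ⟨f, hf⟩ := exists_seq_forall_lt_of_forall_exists_le
    (R := fun 𝔟 𝔠 : Q => s.star ↑(𝔟.1 + 𝔠.1) = 1)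
    (fun 𝔟 𝔠 𝔟' 𝔠' hb hc => s.star_coeIdeal_eq_one_of_le (hne_bot 𝔟 𝔠) (add_le_add hb hc))
    (fun 𝔟 => by
      obtain ⟨𝔠₁, 𝔠₂, h₁, h₂, hQ₁, hQ₂, hstar⟩ :=
        not_starCA_iff.mp (hcon 𝔟.1 𝔟.2.1 𝔟.2.2.1 𝔟.2.2.2.1 𝔟.2.2.2.2)
      exact ⟨⟨𝔠₁, 𝔟.2.1.trans h₁, hQ₁⟩, ⟨𝔠₂, 𝔟.2.1.trans h₂, hQ₂⟩, h₁, h₂, hstar⟩)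
  have : Std.Symm fun n m => s.star ↑((f n).1 + (f m).1) = 1 := ⟨fun n m h => by rwa [add_comm]⟩
  have hcomax : Pairwise fun n m => s.star ↑((f n).1 + (f m).1) = 1 := pairwise_iff_lt.mpr hf
  exact Set.infinite_range_of_injective
    (injective_of_pairwise_star_add_eq_one (fun n => ⟨(f n).2.2.1, (f n).2.2.2.1⟩) hcomax)
    (h _ (range_mem_sigmaP (fun n => (f n).2.1 ha𝔞) (fun n => (f n).2.2) hcomax))
end

section
/- Let A be an integral domain and Δ ⊆ Spec(A) such that A = ⋂_{p∈Δ} A_p is a locally finite intersection. Then the t-operation of A equals ∧_{p∈Δ} t_p; that is, I^t = ⋂_{p∈Δ}(IA_p)^{t_p} for every nonzero fractional ideal I of A, where t_p denotes the t-operation of A_p. -/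
/-!
Membership `x ∈ I^t` is witnessed by a finite set `t ⊆ I` with `x ∈ (A : (A : t))`, written
`1 / (1 / span A t)` below. Such a witness survives localization at `p`: finitely many elements of `(A_p : t)` have a common
denominator `s ∉ p`. Conversely, choose witnesses `t_p ⊆ I` over every `A_p`, a denominator
`d` of `I` and a nonzero `a ∈ I ∩ A`. By local finiteness `d` and `a` are units in all but
finitely many `A_p`, and for those `I ⊆ A_p` and `(A : a) ⊆ A_p`; so `a` together with the
remaining finitely many `t_p` is a witness over `A = ⋂ A_p`.
-/

open scoped nonZeroDivisors

section TOperation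

variable (D : Type*) [CommRing D] [IsDomain D]
  (F : Type*) [Field F] [Algebra D F] [IsFractionRing D F]

/-- The `v`-operation on fractional ideals of `D`: `I^v = (D : (D : I))`. -/
noncomputable def vOp (I : FractionalIdeal D⁰ F) : FractionalIdeal D⁰ F :=
  1 / (1 / I)

/-- The `t`-operation (as a set): `N^t = ⋃ {J^v : J ⊆ N, J a finitely generated
fractional ideal}`. -/
noncomputable def tSet (N : Submodule D F) : Set F :=
  ⋃ J ∈ {J : FractionalIdeal D⁰ F | (J : Submodule D F) ≤ N ∧ (J : Submodule D F).FG},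
    (vOp D F J : Set F)

/-- The image of an integral ideal of `D` in `F`, as a `D`-submodule of `F`. -/
def idlSub (I : Ideal D) : Submodule D F :=
  ((I : FractionalIdeal D⁰ F) : Submodule D F)

/-- A (nonzero) ideal `I` of `D` is a `t`-ideal if `I^t = I`. -/
def IsTIdeal (I : Ideal D) : Prop :=
  I ≠ 0 ∧ tSet D F (idlSub D F I) = (idlSub D F I : Set F)

/-- A (nonzero) ideal `I` of `D` is `t`-finite if `J^t = I^t` for some finitely
generated (nonzero) ideal `J`. -/
def IsTFinite (I : Ideal D) : Prop :=
  I ≠ 0 ∧ ∃ J : Ideal D, J ≠ 0 ∧ J.FG ∧ tSet D F (idlSub D F J) = tSet D F (idlSub D F I)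

/-- An ideal of `D` is `t`-maximal if it is maximal among proper `t`-ideals. -/
def IsTMaximal (M : Ideal D) : Prop :=
  M ≠ ⊤ ∧ IsTIdeal D F M ∧ ∀ J : Ideal D, J ≠ ⊤ → IsTIdeal D F J → M ≤ J → J = M

/-- `D` has the `t`-finite character if every nonzero element of `D` lies in only
finitely many `t`-maximal ideals. -/
def HasTFiniteCharacter : Prop :=
  ∀ a : D, a ≠ 0 → {M : Ideal D | IsTMaximal D F M ∧ a ∈ M}.Finite

/-- A (nonzero) ideal `I` of `D` is `t`-invertible if `(I·I⁻¹)^t = D`, where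
`I⁻¹ = (D : I)`. -/
def IsTInvertible (I : Ideal D) : Prop :=
  I ≠ 0 ∧ tSet D F
      (((I : FractionalIdeal D⁰ F) * (1 / (I : FractionalIdeal D⁰ F)) :
        FractionalIdeal D⁰ F) : Submodule D F) =
    (((1 : FractionalIdeal D⁰ F) : Submodule D F) : Set F)

/-- `D` is `v`-coherent: for every nonzero finitely generated ideal `I`,
`I⁻¹ = J^v` for some finitely generated (nonzero) fractional ideal `J`. -/
def IsVCoherent : Prop :=
  ∀ I : Ideal D, I ≠ 0 → I.FG →
    ∃ J : FractionalIdeal D⁰ F, J ≠ 0 ∧ (J : Submodule D F).FG ∧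
      1 / (I : FractionalIdeal D⁰ F) = vOp D F J

/-- `D` is a PvMD if every nonzero finitely generated ideal of `D` is `t`-invertible. -/
def IsPvMD : Prop :=
  ∀ I : Ideal D, I ≠ 0 → I.FG → IsTInvertible D F I

/-- `D` is a GCD domain: any two elements have a greatest common divisor. -/
def IsGCDDomain (D : Type*) [CommRing D] [IsDomain D] : Prop :=
  ∀ a b : D, ∃ d : D, d ∣ a ∧ d ∣ b ∧ ∀ c : D, c ∣ a → c ∣ b → c ∣ d

end TOperation

namespace Submodule

variable {R A : Type*} [CommSemiring R] [CommSemiring A] [Algebra R A]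

theorem div_le_div_left {I J J' : Submodule R A} (h : J ≤ J') : I / J' ≤ I / J :=
  fun _ hx y hy => hx y (h hy)

theorem mem_div_span_iff {I : Submodule R A} {s : Set A} {x : A} :
    x ∈ I / span R s ↔ ∀ y ∈ s, x * y ∈ I := by
  refine ⟨fun h y hy => h y (subset_span hy), fun h y hy => ?_⟩
  have : span R s ≤ I.comap (LinearMap.mulLeft R x) := span_le.mpr h
  exact this hy

theorem one_div_one_div_le_one {J : Submodule R A} (hJ : J ≤ 1) : 1 / (1 / J) ≤ 1 :=
  fun x hx => by simpa using hx 1 (one_mem_div.mpr hJ)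

end Submodule

namespace Subalgebra

variable {A K : Type*} [CommRing A] [CommRing K] [Algebra A K]

theorem mem_one_submodule_iff {R : Subalgebra A K} {x : K} :
    x ∈ (1 : Submodule R K) ↔ x ∈ R := by
  simp [Submodule.mem_one]

theorem mem_of_algebraMap_mul_mem {R : Subalgebra A K} {a : A} (ha : IsUnit (algebraMap A R a))
    {w : K} (h : algebraMap A K a * w ∈ R) : w ∈ R := by
  obtain ⟨u, hu⟩ := ha
  have hinv : ((u⁻¹ : Rˣ) : K) * algebraMap A K a = 1 := by
    rw [IsScalarTower.algebraMap_apply A R K, ← hu]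
    exact congrArg Subtype.val u.inv_mul
  simpa [← mul_assoc, hinv] using mul_mem ((u⁻¹ : Rˣ) : R).2 h

theorem le_toSubmodule_of_isInteger_smul {R : Subalgebra A K} {N : Submodule A K} {d : A}
    (hN : ∀ y ∈ N, IsLocalization.IsInteger A (d • y)) (hd : IsUnit (algebraMap A R d)) :
    N ≤ Subalgebra.toSubmodule R := fun y hy => by
  obtain ⟨a, ha⟩ := hN y hy
  refine mem_of_algebraMap_mul_mem hd ?_
  rw [← Algebra.smul_def, ← ha]
  exact R.algebraMap_mem a

end Subalgebra

section VOperation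

variable {D F : Type*} [CommRing D] [IsDomain D] [Field F] [Algebra D F] [IsFractionRing D F]

theorem FractionalIdeal.one_div_ne_zero {J : FractionalIdeal D⁰ F} (hJ : J ≠ 0) : 1 / J ≠ 0 := by
  obtain ⟨d, hd, hdJ⟩ := J.isFractional
  have hd_mem : algebraMap D F d ∈ 1 / J := by
    rw [FractionalIdeal.mem_div_iff_of_ne_zero hJ]
    intro y hy
    obtain ⟨a, ha⟩ := hdJ y hy
    exact (FractionalIdeal.mem_one_iff _).mpr ⟨a, by rw [ha, Algebra.smul_def]⟩
  intro h
  rw [h, FractionalIdeal.mem_zero_iff, IsFractionRing.to_map_eq_zero_iff] at hd_mem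
  exact nonZeroDivisors.ne_zero hd hd_mem

theorem coe_vOp {J : FractionalIdeal D⁰ F} (hJ : J ≠ 0) :
    (vOp D F J : Submodule D F) = 1 / (1 / (J : Submodule D F)) := by
  rw [vOp, FractionalIdeal.coe_div (FractionalIdeal.one_div_ne_zero hJ),
    FractionalIdeal.coe_div hJ, FractionalIdeal.coe_one]

theorem exists_finset_subset_of_mem_tSet {N : Submodule D F} {x : F} (hx : x ∈ tSet D F N) :
    ∃ t : Finset F, (t : Set F) ⊆ N ∧
      x ∈ (1 : Submodule D F) / (1 / Submodule.span D (t : Set F)) := by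
  simp only [tSet, Set.mem_iUnion, Set.mem_ofPred_eq, SetLike.mem_coe, exists_prop] at hx
  obtain ⟨J, ⟨hJN, t, ht⟩, hx⟩ := hx
  rcases eq_or_ne J 0 with rfl | hJ
  · refine ⟨∅, by simp, ?_⟩
    rw [show x = 0 by simpa [vOp] using hx]
    exact zero_mem _
  · refine ⟨t, fun y hy => hJN (ht ▸ Submodule.subset_span hy), ?_⟩
    rw [ht, ← coe_vOp hJ]
    exact hx

theorem mem_tSet_of_subset {N : Submodule D F} (hN : N ≠ ⊥) {t : Finset F} (ht : (t : Set F) ⊆ N)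
    {x : F} (hx : x ∈ (1 : Submodule D F) / (1 / Submodule.span D (t : Set F))) :
    x ∈ tSet D F N := by
  classical
  obtain ⟨y, hyN, hy⟩ := N.ne_bot_iff.mp hN
  set J := FractionalIdeal.spanFinset D (insert y t) id
  have hJ_coe : (J : Submodule D F) = Submodule.span D ↑(insert y t) := by simp [J]
  have hJ : J ≠ 0 := FractionalIdeal.spanFinset_ne_zero.mpr ⟨y, Finset.mem_insert_self y t, hy⟩
  simp only [tSet, Set.mem_iUnion, Set.mem_ofPred_eq, SetLike.mem_coe, exists_prop]
  refine ⟨J, ⟨?_, hJ_coe ▸ ⟨_, rfl⟩⟩, ?_⟩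
  · rw [hJ_coe, Submodule.span_le, Finset.coe_insert]
    exact Set.insert_subset hyN ht
  · rw [← FractionalIdeal.mem_coe, coe_vOp hJ, hJ_coe]
    refine Submodule.div_le_div_left (Submodule.div_le_div_left (Submodule.span_mono ?_)) hx
    simp

theorem exists_finset_subset_of_mem_tSet_span {s : Set F} {x : F}
    (hx : x ∈ tSet D F (Submodule.span D s)) :
    ∃ t : Finset F, (t : Set F) ⊆ s ∧
      x ∈ (1 : Submodule D F) / (1 / Submodule.span D (t : Set F)) := by
  obtain ⟨t, hts, hx⟩ := exists_finset_subset_of_mem_tSet hx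
  obtain ⟨T, hTs, htT⟩ := Submodule.subset_span_finite_of_subset_span hts
  exact ⟨T, hTs, Submodule.div_le_div_left
    (Submodule.div_le_div_left (Submodule.span_le.mpr htT)) hx⟩

end VOperation

section Localization

variable {A : Type*} [CommRing A] (S : Submonoid A) (hS : S ≤ A⁰)

theorem mem_one_div_one_div_span_localization {K : Type*} [CommRing K] [Algebra A K]
    [IsFractionRing A K] {t : Finset K} {x : K}
    (hx : x ∈ (1 : Submodule A K) / (1 / Submodule.span A (t : Set K))) :
    x ∈ (1 : Submodule (Localization.subalgebra K S hS) K) /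
      (1 / Submodule.span (Localization.subalgebra K S hS) (t : Set K)) := by
  set R := Localization.subalgebra K S hS
  intro z hz
  simp only [Submodule.mem_div_span_iff, Subalgebra.mem_one_submodule_iff] at hz
  obtain ⟨b, hb⟩ := IsLocalization.exist_integer_multiples_of_finite S
    (fun y : t => (⟨z * y, hz y y.2⟩ : R))
  have hbz : algebraMap A K b * z ∈ 1 / Submodule.span A (t : Set K) := by
    refine Submodule.mem_div_span_iff.mpr fun y hy => Submodule.mem_one.mpr ?_
    obtain ⟨a, ha⟩ := hb ⟨y, hy⟩
    refine ⟨a, ?_⟩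
    simpa [Algebra.smul_def, mul_assoc] using congrArg Subtype.val ha
  obtain ⟨c, hc⟩ := Submodule.mem_one.mp (hx _ hbz)
  rw [Subalgebra.mem_one_submodule_iff]
  refine Subalgebra.mem_of_algebraMap_mul_mem (IsLocalization.map_units R b) ?_
  rw [mul_left_comm, ← hc]
  exact R.algebraMap_mem c

theorem tSet_subset_tSet_span_localization [IsDomain A] {K : Type*} [Field K] [Algebra A K]
    [IsFractionRing A K] {N : Submodule A K} (hN : N ≠ ⊥) :
    tSet A K N ⊆
      tSet (Localization.subalgebra K S hS) K (Submodule.span _ (N : Set K)) := by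
  intro x hx
  obtain ⟨t, htN, hxt⟩ := exists_finset_subset_of_mem_tSet hx
  obtain ⟨y, hyN, hy⟩ := N.ne_bot_iff.mp hN
  exact mem_tSet_of_subset ((Submodule.ne_bot_iff _).mpr ⟨y, Submodule.subset_span hyN, hy⟩)
    (htN.trans Submodule.subset_span) (mem_one_div_one_div_span_localization S hS hxt)

end Localization

section LocallyFiniteIntersection

variable {A K : Type*} [CommRing A] [IsDomain A] [Field K] [Algebra A K] [IsFractionRing A K]
  {ι : Type*} {R : ι → Subalgebra A K}

theorem iInter_tSet_span_subset_tSet (hR : ⨅ i, R i = ⊥)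
    (hfin : ∀ a : A, a ≠ 0 → {i | ¬IsUnit (algebraMap A (R i) a)}.Finite)
    {I : FractionalIdeal A⁰ K} (hI : I ≠ 0) :
    ⋂ i, tSet (R i) K (Submodule.span (R i) (I : Set K)) ⊆ tSet A K I := by
  classical
  intro x hx
  rw [Set.mem_iInter] at hx
  choose t htI hxt using fun i => exists_finset_subset_of_mem_tSet_span (hx i)
  obtain ⟨d, hd, hdI⟩ := I.isFractional
  obtain ⟨a, ha, haI⟩ := FractionalIdeal.exists_ne_zero_mem_isInteger hI
  set B := (hfin (d * a) (mul_ne_zero (nonZeroDivisors.ne_zero hd) ha)).toFinset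
  set T := insert (algebraMap A K a) (B.biUnion t)
  have hTI : (T : Set K) ⊆ I := by
    simp only [T, Finset.coe_insert, Finset.coe_biUnion, Set.insert_subset_iff]
    exact ⟨haI, Set.iUnion₂_subset fun i _ => htI i⟩
  refine mem_tSet_of_subset (FractionalIdeal.coeToSubmodule_ne_bot.mpr hI) hTI fun z hz => ?_
  have hzT : ∀ y ∈ T, ∀ i, z * y ∈ R i := fun y hy i => by
    obtain ⟨c, hc⟩ := Submodule.mem_one.mp (Submodule.mem_div_span_iff.mp hz y hy)
    exact hc ▸ (R i).algebraMap_mem c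
  suffices ∀ i, x * z ∈ R i by
    have : x * z ∈ (⊥ : Subalgebra A K) := hR ▸ Algebra.mem_iInf.mpr this
    exact Submodule.mem_one.mpr (Algebra.mem_bot.mp this)
  intro i
  by_cases hi : i ∈ B
  · refine Subalgebra.mem_one_submodule_iff.mp (hxt i z (Submodule.mem_div_span_iff.mpr ?_))
    exact fun y hy => Subalgebra.mem_one_submodule_iff.mpr
      (hzT y (Finset.mem_insert_of_mem (Finset.mem_biUnion.mpr ⟨i, hi, hy⟩)) i)
  · have hu : IsUnit (algebraMap A (R i) (d * a)) := by simpa [B] using hi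
    rw [map_mul] at hu
    have hIR := Subalgebra.le_toSubmodule_of_isInteger_smul hdI (isUnit_of_mul_isUnit_left hu)
    have hspan : Submodule.span (R i) (t i : Set K) ≤ 1 := Submodule.span_le.mpr fun y hy =>
      Subalgebra.mem_one_submodule_iff.mpr (hIR (FractionalIdeal.mem_coe.mpr (htI i hy)))
    have hxR : x ∈ R i :=
      Subalgebra.mem_one_submodule_iff.mp (Submodule.one_div_one_div_le_one hspan (hxt i))
    have hzR : z ∈ R i := Subalgebra.mem_of_algebraMap_mul_mem (isUnit_of_mul_isUnit_right hu)
      (mul_comm z _ ▸ hzT _ (Finset.mem_insert_self _ _) i)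
    exact mul_mem hxR hzR

end LocallyFiniteIntersection

variable (A : Type*) [CommRing A] [IsDomain A]
  (K : Type*) [Field K] [Algebra A K] [IsFractionRing A K]

/-- The localization `A_p` of `A` at a prime ideal `p`, realized as a subalgebra of the
quotient field `K` of `A`. -/
@[reducible] noncomputable def locAt (p : Ideal A) (hp : p.IsPrime) : Subalgebra A K :=
  Localization.subalgebra K (@Ideal.primeCompl A _ p hp)
    (@Ideal.primeCompl_le_nonZeroDivisors A _ _ p hp)

/-- Let `A = ⋂_{p ∈ Δ} A_p` be a locally finite intersection of localizations at primes
`p ∈ Δ`. Then the `t`-operation of `A` equals `∧_{p∈Δ} t_p`; that is,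
`I^t = ⋂_{p∈Δ} (IA_p)^{t_p}` for every nonzero fractional ideal `I` of `A`, where
`t_p` is the `t`-operation of `A_p`. -/
theorem t_eq_inf_local_t
    {A : Type*} [CommRing A] [IsDomain A]
    {K : Type*} [Field K] [Algebra A K] [IsFractionRing A K]
    (Δ : Set (Ideal A)) (hΔ : ∀ p ∈ Δ, p.IsPrime)
    (hint : (⋂ (p : Ideal A), ⋂ (h : p ∈ Δ), ((locAt A K p (hΔ p h) : Subalgebra A K) : Set K))
      = Set.range (algebraMap A K))
    (hlf : ∀ a : A, a ≠ 0 →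
      {p : Ideal A | ∃ h : p ∈ Δ,
        ¬IsUnit (algebraMap A (locAt A K p (hΔ p h)) a)}.Finite) :
    ∀ I : FractionalIdeal A⁰ K, I ≠ 0 →
      tSet A K (I : Submodule A K) =
        ⋂ (p : Ideal A), ⋂ (h : p ∈ Δ),
          tSet (locAt A K p (hΔ p h)) K
            (Submodule.span (locAt A K p (hΔ p h)) (I : Set K)) := by
  intro I hI
  refine Set.Subset.antisymm (fun x hx => Set.mem_iInter₂.mpr fun p hp =>
    tSet_subset_tSet_span_localization _ _ (FractionalIdeal.coeToSubmodule_ne_bot.mpr hI) hx) ?_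
  let R : Δ → Subalgebra A K := fun p => locAt A K p (hΔ p p.2)
  have hR : ⨅ p, R p = ⊥ := by
    ext w
    rw [Algebra.mem_iInf, Algebra.mem_bot, ← hint]
    simp [R]
  have hfin : ∀ a : A, a ≠ 0 → {p | ¬IsUnit (algebraMap A (R p) a)}.Finite := fun a ha =>
    (hlf a ha).preimage Subtype.val_injective.injOn |>.subset fun p hp => ⟨p.2, hp⟩
  intro x hx
  exact iInter_tSet_span_subset_tSet hR hfin hI
    (Set.mem_iInter.mpr fun p => Set.mem_iInter₂.mp hx p p.2)
end

section
/- Let A be an integral domain, ⋆ a star operation of finite type on A, a a nonzero element of A, and ℱ a ⋆-comaximal collection over a of ideals of A. Define 𝔞 := {x ∈ A : x·∏ℱ' ⊆ aA for some finite subcollection ℱ' ⊆ ℱ}. Then for each ⋆-maximal ideal 𝔪 of A: if no member of ℱ is contained in 𝔪, then 𝔞A_𝔪 = aA_𝔪; and if 𝔟₀ is the unique member of ℱ contained in 𝔪, then 𝔞A_𝔪 = a(A : 𝔟₀)A_𝔪. -/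
open scoped nonZeroDivisors Pointwise

variable {A : Type*} [CommRing A] [IsDomain A]
  {K : Type*} [Field K] [Algebra A K] [IsFractionRing A K]

/-- The set `𝔞 = {x ∈ A : x·∏ℱ' ⊆ aA for some finite subcollection ℱ' ⊆ ℱ}`. -/
def prodSet {A : Type*} [CommRing A] (F : Set (Ideal A)) (a : A) : Set A :=
  {x : A | ∃ G : Finset (Ideal A), ↑G ⊆ F ∧
    Ideal.span {x} * (G.prod id) ≤ Ideal.span {a}}

/-!
A member of `ℱ` not contained in `𝔪` contains an element of `A ∖ 𝔪`, a unit of `A_𝔪`, and so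
does every finite product of such members. Hence `x ∈ 𝔞` forces `x ∈ aA_𝔪` when no member of `ℱ`
lies in `𝔪`, and `x·𝔟₀ ⊆ aA_𝔪`, i.e. `x ∈ a(A : 𝔟₀)A_𝔪`, when `𝔟₀` is the only one. Conversely,
as `a ∈ 𝔟₀`, every `a·y` with `y ∈ (A : 𝔟₀)` lies in `A` and satisfies `a·y·𝔟₀ ⊆ aA`, so it is
already in `𝔞`.
-/

theorem Ideal.exists_mem_prod_notMem_of_forall_not_le {R : Type*} [CommSemiring R]
    {P : Ideal R} (hP : P.IsPrime) {G : Finset (Ideal R)} (h : ∀ I ∈ G, ¬I ≤ P) :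
    ∃ t ∈ G.prod id, t ∉ P :=
  SetLike.not_le_iff_exists.1 fun hle =>
    let ⟨I, hI, hIP⟩ := hP.prod_le.1 hle
    h I hI hIP

theorem Ideal.mul_prod_erase_le {R : Type*} [CommSemiring R] [DecidableEq (Ideal R)]
    (G : Finset (Ideal R)) (I : Ideal R) : I * (G.erase I).prod id ≤ G.prod id := by
  by_cases hI : I ∈ G
  · exact (Finset.mul_prod_erase G id hI).le
  · rw [Finset.erase_eq_of_notMem hI]
    exact Ideal.mul_le_right

namespace FractionalIdeal

theorem div_mem_one_iff {R L : Type*} [CommRing R] [Field L] [Algebra R L] [IsFractionRing R L]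
    {a : R} (ha : a ≠ 0) (c : R) :
    algebraMap R L c / algebraMap R L a ∈ (1 : FractionalIdeal R⁰ L) ↔ c ∈ Ideal.span {a} := by
  have ha' : algebraMap R L a ≠ 0 := (IsFractionRing.to_map_eq_zero_iff).not.2 ha
  simp only [mem_one_iff, Ideal.mem_span_singleton', eq_div_iff ha', ← map_mul,
    (IsFractionRing.injective R L).eq_iff]

theorem div_mem_one_div_coeIdeal_iff {𝔟 : Ideal A} (h𝔟 : 𝔟 ≠ ⊥) {a : A} (ha : a ≠ 0) (c : A) :
    algebraMap A K c / algebraMap A K a ∈ 1 / (𝔟 : FractionalIdeal A⁰ K) ↔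
      Ideal.span {c} * 𝔟 ≤ Ideal.span {a} := by
  have key (b : A) : algebraMap A K c / algebraMap A K a * algebraMap A K b ∈
      (1 : FractionalIdeal A⁰ K) ↔ c * b ∈ Ideal.span {a} := by
    rw [div_mul_eq_mul_div, ← map_mul, div_mem_one_iff ha]
  rw [mem_div_iff_of_ne_zero (coeIdeal_ne_zero.2 h𝔟), Ideal.span_singleton_mul_le_iff]
  refine ⟨fun h b hb => (key b).1 (h _ (mem_coeIdeal_of_mem _ hb)), fun h y hy => ?_⟩
  obtain ⟨b, hb, rfl⟩ := (mem_coeIdeal _).1 hy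
  exact (key b).2 (h b hb)

end FractionalIdeal

theorem Localization.subalgebra.mem_span_of_algebraMap_mul_mem {S : Submonoid A} (hS : S ≤ A⁰)
    {T : Set K} {x : K} {t : A} (ht : t ∈ S)
    (h : algebraMap A K t * x ∈ Submodule.span (Localization.subalgebra K S hS) T) :
    x ∈ Submodule.span (Localization.subalgebra K S hS) T := by
  have ht' : algebraMap A K t ≠ 0 := IsFractionRing.to_map_ne_zero_of_mem_nonZeroDivisors (hS ht)
  have hinv : (algebraMap A K t)⁻¹ ∈ Localization.subalgebra K S hS :=
    ⟨1, t, ht, by rw [IsFractionRing.mk'_eq_div, map_one, one_div]⟩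
  have hx : x = (⟨_, hinv⟩ : Localization.subalgebra K S hS) • (algebraMap A K t * x) := by
    rw [Subalgebra.smul_def, smul_eq_mul, inv_mul_cancel_left₀ ht']
  exact hx ▸ Submodule.smul_mem _ _ h

theorem self_mem_prodSet {R : Type*} [CommRing R] (F : Set (Ideal R)) (a : R) :
    a ∈ prodSet F a :=
  ⟨∅, by simp, by simp⟩

section Localization

variable {𝔪 : Ideal A} [𝔪.IsPrime] {F : Set (Ideal A)} {a : A}

theorem span_prodSet_eq_span_singleton (hF : ∀ 𝔟 ∈ F, ¬𝔟 ≤ 𝔪) :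
    Submodule.span (Localization.subalgebra K 𝔪.primeCompl 𝔪.primeCompl_le_nonZeroDivisors)
        (algebraMap A K '' prodSet F a) =
      Submodule.span (Localization.subalgebra K 𝔪.primeCompl 𝔪.primeCompl_le_nonZeroDivisors)
        {algebraMap A K a} := by
  refine le_antisymm (Submodule.span_le.2 ?_)
    (Submodule.span_mono (Set.singleton_subset_iff.2 ⟨a, self_mem_prodSet F a, rfl⟩))
  rintro _ ⟨x, ⟨G, hGF, hxG⟩, rfl⟩
  obtain ⟨t, htG, ht𝔪⟩ := Ideal.exists_mem_prod_notMem_of_forall_not_le ‹_›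
    fun 𝔟 h𝔟 => hF 𝔟 (hGF h𝔟)
  obtain ⟨c, hc⟩ := Ideal.mem_span_singleton'.1
    (hxG (Ideal.mul_mem_mul (Ideal.mem_span_singleton_self x) htG))
  refine Localization.subalgebra.mem_span_of_algebraMap_mul_mem _ ht𝔪 ?_
  rw [← map_mul, mul_comm t x, ← hc, map_mul, ← Algebra.smul_def]
  exact Submodule.smul_of_tower_mem _ c (Submodule.mem_span_singleton_self _)

theorem span_prodSet_le_span_smul_one_div (ha : a ≠ 0) {𝔟₀ : Ideal A} (h𝔟₀ : 𝔟₀ ≠ ⊥)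
    (huniq : ∀ 𝔟 ∈ F, 𝔟 ≤ 𝔪 → 𝔟 = 𝔟₀) :
    Submodule.span (Localization.subalgebra K 𝔪.primeCompl 𝔪.primeCompl_le_nonZeroDivisors)
        (algebraMap A K '' prodSet F a) ≤
      Submodule.span (Localization.subalgebra K 𝔪.primeCompl 𝔪.primeCompl_le_nonZeroDivisors)
        (algebraMap A K a • (↑(1 / (𝔟₀ : FractionalIdeal A⁰ K)) : Set K)) := by
  classical
  rw [Submodule.span_le]
  rintro _ ⟨x, ⟨G, hGF, hxG⟩, rfl⟩
  obtain ⟨t, htG, ht𝔪⟩ := Ideal.exists_mem_prod_notMem_of_forall_not_le ‹_› (G := G.erase 𝔟₀)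
    fun 𝔟 h𝔟 h𝔟𝔪 => Finset.ne_of_mem_erase h𝔟 (huniq 𝔟 (hGF (Finset.mem_of_mem_erase h𝔟)) h𝔟𝔪)
  have hxt : Ideal.span {x * t} * 𝔟₀ ≤ Ideal.span {a} := calc
    Ideal.span {x * t} * 𝔟₀ = Ideal.span {x} * (𝔟₀ * Ideal.span {t}) := by
      rw [← Ideal.span_singleton_mul_span_singleton, mul_assoc, mul_comm (Ideal.span {t})]
    _ ≤ Ideal.span {x} * (𝔟₀ * (G.erase 𝔟₀).prod id) :=
      Ideal.mul_mono_right (Ideal.mul_mono_right ((Ideal.span_singleton_le_iff_mem _).2 htG))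
    _ ≤ Ideal.span {x} * G.prod id := Ideal.mul_mono_right (Ideal.mul_prod_erase_le G 𝔟₀)
    _ ≤ Ideal.span {a} := hxG
  refine Localization.subalgebra.mem_span_of_algebraMap_mul_mem _ ht𝔪 (Submodule.subset_span ?_)
  refine Set.mem_smul_set.2 ⟨_, (FractionalIdeal.div_mem_one_div_coeIdeal_iff h𝔟₀ ha _).2 hxt, ?_⟩
  have ha' : algebraMap A K a ≠ 0 := (IsFractionRing.to_map_eq_zero_iff).not.2 ha
  rw [smul_eq_mul, mul_div_cancel₀ _ ha', map_mul, mul_comm]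

theorem span_smul_one_div_le_span_prodSet (ha : a ≠ 0) {𝔟₀ : Ideal A} (h𝔟₀F : 𝔟₀ ∈ F)
    (ha𝔟₀ : a ∈ 𝔟₀) :
    Submodule.span (Localization.subalgebra K 𝔪.primeCompl 𝔪.primeCompl_le_nonZeroDivisors)
        (algebraMap A K a • (↑(1 / (𝔟₀ : FractionalIdeal A⁰ K)) : Set K)) ≤
      Submodule.span (Localization.subalgebra K 𝔪.primeCompl 𝔪.primeCompl_le_nonZeroDivisors)
        (algebraMap A K '' prodSet F a) := by
  have h𝔟₀ : 𝔟₀ ≠ ⊥ := (Submodule.ne_bot_iff _).2 ⟨a, ha𝔟₀, ha⟩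
  have ha' : algebraMap A K a ≠ 0 := (IsFractionRing.to_map_eq_zero_iff).not.2 ha
  rw [Submodule.span_le]
  rintro _ ⟨y, hy, rfl⟩
  obtain ⟨c, hc⟩ := (FractionalIdeal.mem_one_iff _).1 <|
    (FractionalIdeal.mem_div_iff_of_ne_zero (FractionalIdeal.coeIdeal_ne_zero.2 h𝔟₀)).1 hy _
      (FractionalIdeal.mem_coeIdeal_of_mem _ ha𝔟₀)
  have hyc : y = algebraMap A K c / algebraMap A K a := by rw [hc, mul_div_cancel_right₀ _ ha']
  have hcG : Ideal.span {c} * 𝔟₀ ≤ Ideal.span {a} :=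
    (FractionalIdeal.div_mem_one_div_coeIdeal_iff h𝔟₀ ha c).1 (hyc ▸ hy)
  refine Submodule.subset_span ⟨c, ⟨{𝔟₀}, by simpa using h𝔟₀F, by simpa using hcG⟩, ?_⟩
  exact hc.trans (mul_comm _ _)

end Localization

theorem prodSet_localization_at_star_maximal_general
    (s : StarOperation A K) (a : A) (ha : a ≠ 0)
    (F : Set (Ideal A)) (hcom : IsStarComaximalOver s a F)
    (𝔪 : Ideal A) [𝔪.IsPrime] :
    ((∀ 𝔟 ∈ F, ¬(𝔟 ≤ 𝔪)) →
      Submodule.span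
          (Localization.subalgebra K 𝔪.primeCompl 𝔪.primeCompl_le_nonZeroDivisors)
          (algebraMap A K '' prodSet F a) =
        Submodule.span
          (Localization.subalgebra K 𝔪.primeCompl 𝔪.primeCompl_le_nonZeroDivisors)
          {algebraMap A K a}) ∧
    (∀ 𝔟₀ ∈ F, 𝔟₀ ≤ 𝔪 → (∀ 𝔟 ∈ F, 𝔟 ≤ 𝔪 → 𝔟 = 𝔟₀) →
      Submodule.span
          (Localization.subalgebra K 𝔪.primeCompl 𝔪.primeCompl_le_nonZeroDivisors)
          (algebraMap A K '' prodSet F a) =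
        Submodule.span
          (Localization.subalgebra K 𝔪.primeCompl 𝔪.primeCompl_le_nonZeroDivisors)
          ((algebraMap A K a) •
            ((1 / (𝔟₀ : FractionalIdeal A⁰ K) : FractionalIdeal A⁰ K) : Set K))) := by
  refine ⟨span_prodSet_eq_span_singleton, fun 𝔟₀ h𝔟₀F _ huniq => ?_⟩
  have ha𝔟₀ : a ∈ 𝔟₀ := hcom.1 𝔟₀ h𝔟₀F
  exact le_antisymm
    (span_prodSet_le_span_smul_one_div ha ((Submodule.ne_bot_iff _).2 ⟨a, ha𝔟₀, ha⟩) huniq)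
    (span_smul_one_div_le_span_prodSet ha h𝔟₀F ha𝔟₀)

/-- Let `⋆` be a finite type star operation on `A`, `a ≠ 0`, `ℱ` a ⋆-comaximal
collection over `a` and `𝔞 = {x : x·∏ℱ' ⊆ aA for some finite ℱ' ⊆ ℱ}`. For each
⋆-maximal (prime) ideal `𝔪` of `A`: if no member of `ℱ` is contained in `𝔪` then
`𝔞A_𝔪 = aA_𝔪`, and if `𝔟₀` is the unique member of `ℱ` contained in `𝔪` then
`𝔞A_𝔪 = a(A : 𝔟₀)A_𝔪` (`A_𝔪` realized as a subalgebra of `K`). -/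
theorem prodSet_localization_at_star_maximal
    (s : StarOperation A K) (hs : s.IsFiniteType) (a : A) (ha : a ≠ 0)
    (F : Set (Ideal A)) (hcom : IsStarComaximalOver s a F)
    (𝔪 : Ideal A) [𝔪.IsPrime] (h𝔪 : IsStarMaximal s 𝔪) :
    ((∀ 𝔟 ∈ F, ¬(𝔟 ≤ 𝔪)) →
      Submodule.span
          (Localization.subalgebra K 𝔪.primeCompl 𝔪.primeCompl_le_nonZeroDivisors)
          (algebraMap A K '' prodSet F a) =
        Submodule.span
          (Localization.subalgebra K 𝔪.primeCompl 𝔪.primeCompl_le_nonZeroDivisors)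
          {algebraMap A K a}) ∧
    (∀ 𝔟₀ ∈ F, 𝔟₀ ≤ 𝔪 → (∀ 𝔟 ∈ F, 𝔟 ≤ 𝔪 → 𝔟 = 𝔟₀) →
      Submodule.span
          (Localization.subalgebra K 𝔪.primeCompl 𝔪.primeCompl_le_nonZeroDivisors)
          (algebraMap A K '' prodSet F a) =
        Submodule.span
          (Localization.subalgebra K 𝔪.primeCompl 𝔪.primeCompl_le_nonZeroDivisors)
          ((algebraMap A K a) •
            ((1 / (𝔟₀ : FractionalIdeal A⁰ K) : FractionalIdeal A⁰ K) : Set K))) :=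
  prodSet_localization_at_star_maximal_general s a ha F hcom 𝔪
end

section
/- Let A be an integral domain, ⋆ a star operation of finite type on A, a a nonzero element of A, and ℱ a collection of ideals of A each containing a. Define 𝔞 := {x ∈ A : x·∏ℱ' ⊆ aA for some finite subcollection ℱ' ⊆ ℱ}. If 𝔞 is ⋆-finite, then there exists a finite subcollection Ĝ of ℱ such that 𝔞 = {x ∈ A : x·∏Ĝ ⊆ aA}. -/
/-!
Since `𝔞^⋆ = J^⋆` with `J` finitely generated and `⋆` has finite type, `𝔞 ⊆ S^⋆` for some
finitely generated `S ⊆ 𝔞`. Each of the finitely many generators of `S` lies in `𝔞`, so is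
multiplied into `aA` by a finite product of members of `ℱ`; collecting these members into `Ĝ`
gives `(∏Ĝ)·S ⊆ aA`. Then `(∏Ĝ)·S^⋆ ⊆ ((∏Ĝ)·S)^⋆ ⊆ (aA)^⋆ = aA`, so every `x ∈ 𝔞` satisfies
`x·∏Ĝ ⊆ aA`; the reverse inclusion is the definition of `𝔞`.
-/

open scoped nonZeroDivisors

variable {A : Type*} [CommRing A] [IsDomain A]
  {K : Type*} [Field K] [Algebra A K] [IsFractionRing A K]

open FractionalIdeal

instance FractionalIdeal.instNoZeroDivisors : NoZeroDivisors (FractionalIdeal A⁰ K) :=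
  Function.Injective.noZeroDivisors _ coeToSubmodule_injective coe_zero coe_mul

namespace StarOperation

variable (s : StarOperation A K)

theorem star_spanSingleton {x : K} (hx : x ≠ 0) :
    s.star (spanSingleton A⁰ x) = spanSingleton A⁰ x := by
  simpa [s.star_one] using s.star_smul x hx 1 one_ne_zero

theorem mul_star_le_star_mul {I : FractionalIdeal A⁰ K} (hI : I ≠ 0) (J : FractionalIdeal A⁰ K) :
    J * s.star I ≤ s.star (J * I) := by
  refine mul_le.2 fun j hj y hy ↦ ?_
  rcases eq_or_ne j 0 with rfl | hj0
  · simpa using FractionalIdeal.zero_mem _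
  have hjy : j * y ∈ s.star (spanSingleton A⁰ j * I) := by
    rw [s.star_smul j hj0 I hI]
    exact mul_mem_mul (mem_spanSingleton_self A⁰ j) hy
  exact s.mono _ _ (mul_ne_zero (spanSingleton_ne_zero_iff.2 hj0) hI)
    (mul_le_mul_left (spanSingleton_le_iff_mem.2 hj) I) hjy

theorem mul_star_le_spanSingleton {I J : FractionalIdeal A⁰ K} (hI : I ≠ 0) {w : K} (hw : w ≠ 0)
    (h : J * I ≤ spanSingleton A⁰ w) : J * s.star I ≤ spanSingleton A⁰ w := by
  rcases eq_or_ne J 0 with rfl | hJ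
  · simp
  calc J * s.star I ≤ s.star (J * I) := s.mul_star_le_star_mul hI J
    _ ≤ s.star (spanSingleton A⁰ w) := s.mono _ _ (mul_ne_zero hJ hI) h
    _ = spanSingleton A⁰ w := s.star_spanSingleton hw

theorem span_singleton_mul_le_of_mem_star {S P : Ideal A} (hS : S ≠ 0) {a : A} (ha : a ≠ 0)
    (h : P * S ≤ Ideal.span {a}) {x : A} (hx : algebraMap A K x ∈ s.star S) :
    Ideal.span {x} * P ≤ Ideal.span {a} := by
  rw [← coeIdeal_le_coeIdeal K, coeIdeal_mul, coeIdeal_span_singleton] at h ⊢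
  rw [coeIdeal_span_singleton, mul_comm]
  calc (P : FractionalIdeal A⁰ K) * spanSingleton A⁰ (algebraMap A K x) ≤ P * s.star S :=
        mul_le_mul_right (spanSingleton_le_iff_mem.2 hx) _
    _ ≤ _ := s.mul_star_le_spanSingleton (coeIdeal_ne_zero.2 hS)
        ((map_ne_zero_iff _ (IsFractionRing.injective A K)).2 ha) h

namespace IsFiniteType

variable {s}

theorem exists_fg_le_subset_star (hs : s.IsFiniteType) {I : FractionalIdeal A⁰ K} (hI : I ≠ 0)
    (T : Finset K) (hT : ↑T ⊆ (s.star I : Set K)) :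
    ∃ J, J ≠ 0 ∧ J ≤ I ∧ (J : Submodule A K).FG ∧ ↑T ⊆ (s.star J : Set K) := by
  classical
  induction T using Finset.induction_on with
  | empty =>
    obtain ⟨J, hJ, hJI, hJfg, -⟩ := hs I hI 0 (FractionalIdeal.zero_mem _)
    exact ⟨J, hJ, hJI, hJfg, by simp⟩
  | insert x T _ ih =>
    rw [Finset.coe_insert, Set.insert_subset_iff] at hT
    obtain ⟨J₁, hJ₁, hJ₁I, hJ₁fg, hTJ₁⟩ := ih hT.2
    obtain ⟨J₂, hJ₂, hJ₂I, hJ₂fg, hxJ₂⟩ := hs I hI x hT.1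
    have hJ : J₁ ⊔ J₂ ≠ 0 := fun h ↦ hJ₁ (FractionalIdeal.le_zero_iff.1 (h ▸ le_sup_left))
    refine ⟨J₁ ⊔ J₂, hJ, sup_le hJ₁I hJ₂I, by rw [coe_sup]; exact hJ₁fg.sup hJ₂fg, ?_⟩
    rw [Finset.coe_insert, Set.insert_subset_iff]
    exact ⟨s.mono _ _ hJ₂ le_sup_right hxJ₂, hTJ₁.trans (s.mono _ _ hJ₁ le_sup_left)⟩

theorem exists_fg_le_le_star (hs : s.IsFiniteType) {I J₀ : FractionalIdeal A⁰ K} (hI : I ≠ 0)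
    (hJ₀ : J₀ ≠ 0) (hJ₀fg : (J₀ : Submodule A K).FG) (h : s.star J₀ = s.star I) :
    ∃ J, J ≠ 0 ∧ J ≤ I ∧ (J : Submodule A K).FG ∧ I ≤ s.star J := by
  obtain ⟨T, hT⟩ := hJ₀fg
  have hTI : ↑T ⊆ (s.star I : Set K) := by
    rw [← h]
    exact fun x hx ↦
      s.le_star J₀ hJ₀ (show x ∈ (J₀ : Submodule A K) from hT ▸ Submodule.subset_span hx)
  obtain ⟨J, hJ, hJI, hJfg, hTJ⟩ := hs.exists_fg_le_subset_star hI T hTI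
  have hJ₀J : J₀ ≤ s.star J := by
    rw [← coe_le_coe, ← hT]; exact Submodule.span_le.2 hTJ
  refine ⟨J, hJ, hJI, hJfg, ?_⟩
  calc I ≤ s.star I := s.le_star I hI
    _ = s.star J₀ := h.symm
    _ ≤ s.star (s.star J) := s.mono _ _ hJ₀ hJ₀J
    _ = s.star J := s.star_idem J hJ

theorem exists_fg_le_le_star_of_isStarFinite (hs : s.IsFiniteType) {I : Ideal A}
    (hI : IsStarFinite s I) :
    ∃ S : Ideal A, S ≠ 0 ∧ S ≤ I ∧ S.FG ∧ (I : FractionalIdeal A⁰ K) ≤ s.star S := by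
  obtain ⟨hI0, J₀, hJ₀, hJ₀fg, h⟩ := hI
  have hinj := IsFractionRing.injective A K
  obtain ⟨J, hJ, hJI, hJfg, hIJ⟩ := hs.exists_fg_le_le_star (coeIdeal_ne_zero.2 hI0)
    (coeIdeal_ne_zero.2 hJ₀) ((coeIdeal_fg A⁰ hinj J₀).2 hJ₀fg) h
  obtain ⟨S, rfl⟩ := le_one_iff_exists_coeIdeal.1 (hJI.trans coeIdeal_le_one)
  exact ⟨S, coeIdeal_ne_zero.1 hJ, (coeIdeal_le_coeIdeal K).1 hJI, (coeIdeal_fg A⁰ hinj S).1 hJfg,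
    hIJ⟩

end IsFiniteType

end StarOperation

theorem Ideal.span_singleton_mul_prod_le_of_subset {R : Type*} [CommRing R] {x a : R}
    {G G' : Finset (Ideal R)} (hGG' : G ⊆ G') (h : Ideal.span {x} * G.prod id ≤ Ideal.span {a}) :
    Ideal.span {x} * G'.prod id ≤ Ideal.span {a} :=
  (mul_le_mul_right (Finset.prod_le_prod_of_subset_of_le_one' hGG' fun _ _ _ ↦ by simp) _).trans h

theorem exists_finset_forall_span_singleton_mul_prod_le {R : Type*} [CommRing R]
    {F : Set (Ideal R)} {a : R} (T : Finset R) (hT : ↑T ⊆ prodSet F a) :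
    ∃ G : Finset (Ideal R), ↑G ⊆ F ∧ ∀ x ∈ T, Ideal.span {x} * G.prod id ≤ Ideal.span {a} := by
  classical
  induction T using Finset.induction_on with
  | empty => exact ⟨∅, by simp, by simp⟩
  | insert x T _ ih =>
    rw [Finset.coe_insert, Set.insert_subset_iff] at hT
    obtain ⟨G₁, hG₁F, hTG₁⟩ := ih hT.2
    obtain ⟨G₂, hG₂F, hxG₂⟩ := hT.1
    refine ⟨G₁ ∪ G₂, by simpa using ⟨hG₁F, hG₂F⟩, (Finset.forall_mem_insert _ _ _).2 ⟨?_, ?_⟩⟩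
    · exact Ideal.span_singleton_mul_prod_le_of_subset Finset.subset_union_right hxG₂
    · exact fun y hy ↦
        Ideal.span_singleton_mul_prod_le_of_subset Finset.subset_union_left (hTG₁ y hy)

theorem Ideal.span_mul_le_of_forall_span_singleton_mul_le {R : Type*} [CommRing R] {T : Set R}
    {I J : Ideal R} (h : ∀ x ∈ T, Ideal.span {x} * I ≤ J) : Ideal.span T * I ≤ J := by
  rw [Ideal.span, Submodule.span_eq_iSup_of_singleton_spans, Submodule.iSup_mul]
  refine iSup_le fun x ↦ ?_
  rw [Submodule.iSup_mul]
  exact iSup_le (h x)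

theorem prodSet_eq_of_starFinite_general
    (s : StarOperation A K) (hs : s.IsFiniteType) (a : A) (ha : a ≠ 0)
    (F : Set (Ideal A))
    (𝔞 : Ideal A) (h𝔞 : (𝔞 : Set A) = prodSet F a) (hfin : IsStarFinite s 𝔞) :
    ∃ G : Finset (Ideal A), ↑G ⊆ F ∧
      (𝔞 : Set A) = {x : A | Ideal.span {x} * (G.prod id) ≤ Ideal.span {a}} := by
  obtain ⟨S, hS, hS𝔞, ⟨T, rfl⟩, h𝔞S⟩ := hs.exists_fg_le_le_star_of_isStarFinite hfin
  obtain ⟨G, hGF, hTG⟩ := exists_finset_forall_span_singleton_mul_prod_le T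
    (h𝔞 ▸ Ideal.subset_span.trans hS𝔞)
  have hGS : G.prod id * Ideal.span T ≤ Ideal.span {a} := by
    rw [mul_comm]; exact Ideal.span_mul_le_of_forall_span_singleton_mul_le hTG
  refine ⟨G, hGF, Set.Subset.antisymm (fun x hx ↦ ?_) (fun x hx ↦ h𝔞 ▸ ⟨G, hGF, hx⟩)⟩
  exact s.span_singleton_mul_le_of_mem_star hS ha hGS (h𝔞S ((mem_coeIdeal A⁰).2 ⟨x, hx, rfl⟩))

/-- Let `⋆` be a finite type star operation on `A`, `a ≠ 0`, `ℱ` a collection of ideals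
of `A` each containing `a`, and `𝔞` the ideal
`{x : x·∏ℱ' ⊆ aA for some finite ℱ' ⊆ ℱ}`. If `𝔞` is ⋆-finite, then there is a finite
subcollection `Ĝ ⊆ ℱ` with `𝔞 = {x : x·∏Ĝ ⊆ aA}`. -/
theorem prodSet_eq_of_starFinite
    (s : StarOperation A K) (hs : s.IsFiniteType) (a : A) (ha : a ≠ 0)
    (F : Set (Ideal A)) (hF : ∀ I ∈ F, a ∈ I)
    (𝔞 : Ideal A) (h𝔞 : (𝔞 : Set A) = prodSet F a) (hfin : IsStarFinite s 𝔞) :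
    ∃ G : Finset (Ideal A), ↑G ⊆ F ∧
      (𝔞 : Set A) = {x : A | Ideal.span {x} * (G.prod id) ≤ Ideal.span {a}} :=
  prodSet_eq_of_starFinite_general s hs a ha F 𝔞 h𝔞 hfin
end
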